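/- arXiv:2004.11719 — 4 statements merged into one kernel-verified Lean document; each statement's English description precedes it below -/
import Mathlib

section
/- If s is a finite binary sequence and X ⊆ 2^ω is comeager in the basic open set [s] = {x ∈ 2^ω : s is an initial segment of x} (i.e., [s] ∖ X is meager), then there exists a Silver tree T with [T] ⊆ X ∩ [s]. -/
/-!
A Silver tree is determined by a branch `y` and an infinite set `F` of free positions: its body
consists of the `x` agreeing with `y` off `F`. Write `[s] \ X` as disjoint from `⋂ k, U k` with
every `U k` open and dense. Since there are only finitely many ways to fill the positions below
`n`, repeated use of density yields a block `[n, N)` and a pattern on it forcing membership in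
`U k` whatever the positions below `n` are. Fusion alternates such a block for `U k` with one free
position, starting after `s`; the body of the resulting Silver tree lies in `[s]` and in every
`U k`.
-/

/-- `T` is a tree of finite binary sequences: closed under initial segments. -/
def IsTree (T : Set (List Bool)) : Prop :=
  ∀ t ∈ T, ∀ k : ℕ, t.take k ∈ T

/-- `t` is a splitting node of `T`: it lies in `T` and both its one-bit extensions do. -/
def SplitNode (T : Set (List Bool)) (t : List Bool) : Prop :=
  t ∈ T ∧ t ++ [false] ∈ T ∧ t ++ [true] ∈ T

/-- `T` is a perfect tree: a nonempty tree in which every node extends to a splitting node. -/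
def IsPerfect (T : Set (List Bool)) : Prop :=
  IsTree T ∧ T.Nonempty ∧ ∀ t ∈ T, ∃ s, t <+: s ∧ SplitNode T s

/-- `T` is a Silver (uniform perfect) tree: perfect, and nodes of equal length
have the same one-bit extensions in `T`. -/
def IsSilver (T : Set (List Bool)) : Prop :=
  IsPerfect T ∧ ∀ s ∈ T, ∀ t ∈ T, s.length = t.length →
    ∀ i : Bool, (s ++ [i] ∈ T ↔ t ++ [i] ∈ T)

/-- The body `[T]` of a tree: all infinite branches whose finite initial
segments all lie in `T`. -/
def body (T : Set (List Bool)) : Set (ℕ → Bool) :=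
  { x | ∀ n : ℕ, (List.ofFn fun i : Fin n => x i) ∈ T }

/-- The basic open set `[s]` of all branches extending the finite sequence `s`. -/
def cyl (s : List Bool) : Set (ℕ → Bool) :=
  { x | ∀ i : Fin s.length, x i = s.get i }

open PiNat Set

lemma exists_le_cylinder_subset {U : Set (ℕ → Bool)} (hU : IsOpen U) {x : ℕ → Bool} (hx : x ∈ U)
    (n : ℕ) : ∃ N, n ≤ N ∧ cylinder x N ⊆ U := by
  obtain ⟨_, ⟨z, m, rfl⟩, hxz, hsub⟩ :=
    (isTopologicalBasis_cylinders fun _ => Bool).exists_subset_of_mem_open hx hU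
  rw [← mem_cylinder_iff_eq.1 hxz] at hsub
  exact ⟨max n m, le_max_left n m, (cylinder_anti x (le_max_right n m)).trans hsub⟩

lemma IsOpen.exists_forcing_block {U : Set (ℕ → Bool)} (hU : IsOpen U) (hD : Dense U) (n : ℕ) :
    ∃ (y : ℕ → Bool) (N : ℕ), n ≤ N ∧ ∀ x : ℕ → Bool, (∀ i ∈ Ico n N, x i = y i) → x ∈ U := by
  suffices ∀ S : Finset (Fin n → Bool), ∃ (y : ℕ → Bool) (N : ℕ), n ≤ N ∧
      ∀ x : ℕ → Bool, (fun i : Fin n => x i) ∈ S → (∀ i ∈ Ico n N, x i = y i) → x ∈ U by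
    obtain ⟨y, N, hnN, hy⟩ := this Finset.univ
    exact ⟨y, N, hnN, fun x => hy x (Finset.mem_univ _)⟩
  intro S
  induction S using Finset.induction_on with
  | empty => exact ⟨fun _ => false, n, le_rfl, by simp⟩
  | insert a S _ ih =>
    obtain ⟨y, N, hnN, hy⟩ := ih
    -- A point of `U` close to the new head `a` followed by the old pattern `y` extends the block.
    let z i := if h : i < n then a ⟨i, h⟩ else y i
    obtain ⟨w, hwz, hwU⟩ := hD.inter_open_nonempty (cylinder z N) (isOpen_cylinder _ z N)
      ⟨z, self_mem_cylinder z N⟩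
    obtain ⟨M, hNM, hM⟩ := exists_le_cylinder_subset hU hwU N
    refine ⟨w, M, hnN.trans hNM, fun x hx hxw => ?_⟩
    rcases Finset.mem_insert.1 hx with rfl | hxS
    · refine hM fun i hi => ?_
      by_cases hin : i < n
      · simp [hwz i (by omega), z, hin]
      · exact hxw i ⟨by omega, hi⟩
    · refine hy x hxS fun i hi => ?_
      rw [hxw i ⟨hi.1, hi.2.trans_le hNM⟩, hwz i hi.2]
      simp [z, hi.1.not_gt]

lemma exists_forall_eq_of_eq_below {α : Type*} {z : ℕ → ℕ → α} {n : ℕ → ℕ} (hn : StrictMono n)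
    (hz : ∀ k, ∀ i < n k, z (k + 1) i = z k i) : ∃ y : ℕ → α, ∀ k, ∀ i < n k, y i = z k i := by
  have hstable : ∀ k m, k ≤ m → ∀ i < n k, z m i = z k i := by
    intro k m hkm
    induction m, hkm using Nat.le_induction with
    | base => exact fun _ _ => rfl
    | succ m hkm ih => exact fun i hi => (hz m i (hi.trans_le (hn.monotone hkm))).trans (ih i hi)
  refine ⟨fun i => z (i + 1) i, fun k i hi => ?_⟩
  have hi' : i < n (i + 1) := hn.id_le (i + 1)
  rcases le_total k (i + 1) with hk | hk
  · exact hstable k (i + 1) hk i hi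
  · exact (hstable (i + 1) k hk i hi').symm

def silverTree (y : ℕ → Bool) (F : Set ℕ) : Set (List Bool) :=
  {t | ∀ i (hi : i < t.length), i ∉ F → t[i] = y i}

section silverTree

variable {y : ℕ → Bool} {F : Set ℕ}

lemma take_mem_silverTree {t : List Bool} (ht : t ∈ silverTree y F) (k : ℕ) :
    t.take k ∈ silverTree y F := fun i hi hiF => by
  simpa using ht i (by simp at hi; omega) hiF

lemma append_singleton_mem_silverTree {t : List Bool} {b : Bool} :
    t ++ [b] ∈ silverTree y F ↔ t ∈ silverTree y F ∧ (t.length ∉ F → b = y t.length) := by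
  simp only [silverTree, mem_ofPred_eq, List.length_append, List.length_singleton]
  constructor
  · intro h
    refine ⟨fun i hi hiF => ?_, fun hF => by simpa using h t.length (by omega) hF⟩
    simpa [List.getElem_append_left hi] using h i (by omega) hiF
  · rintro ⟨ht, hb⟩ i hi hiF
    rcases Nat.lt_succ_iff_lt_or_eq.1 hi with hi | rfl
    · simpa [List.getElem_append_left hi] using ht i hi hiF
    · simpa using hb hiF

lemma exists_prefix_mem_silverTree {t : List Bool} (ht : t ∈ silverTree y F) {m : ℕ}
    (hm : t.length ≤ m) : ∃ t' ∈ silverTree y F, t <+: t' ∧ t'.length = m := by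
  induction m, hm using Nat.le_induction with
  | base => exact ⟨t, ht, List.prefix_refl t, rfl⟩
  | succ m _ ih =>
    obtain ⟨t', ht', htt', rfl⟩ := ih
    exact ⟨t' ++ [y t'.length], append_singleton_mem_silverTree.2 ⟨ht', fun _ => rfl⟩,
      htt'.trans (List.prefix_append _ _), by simp⟩

lemma isSilver_silverTree (hF : F.Infinite) : IsSilver (silverTree y F) := by
  refine ⟨⟨fun t ht k => take_mem_silverTree ht k, ⟨[], fun i hi => by simp at hi⟩,
    fun t ht => ?_⟩, fun s hs t ht hst i => ?_⟩
  · obtain ⟨m, hmF, htm⟩ := hF.exists_gt t.length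
    obtain ⟨t', ht', htt', rfl⟩ := exists_prefix_mem_silverTree ht htm.le
    exact ⟨t', htt', ht', append_singleton_mem_silverTree.2 ⟨ht', absurd hmF⟩,
      append_singleton_mem_silverTree.2 ⟨ht', absurd hmF⟩⟩
  · simp [append_singleton_mem_silverTree, hs, ht, hst]

lemma mem_body_silverTree {x : ℕ → Bool} :
    x ∈ body (silverTree y F) ↔ ∀ i ∉ F, x i = y i := by
  simp only [body, silverTree, mem_ofPred_eq, List.length_ofFn, List.getElem_ofFn]
  exact ⟨fun h i hiF => h (i + 1) i (by omega) hiF, fun h n i _ hiF => h i hiF⟩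

end silverTree

lemma exists_infinite_free_subset_iInter {U : ℕ → Set (ℕ → Bool)} (hUo : ∀ k, IsOpen (U k))
    (hUd : ∀ k, Dense (U k)) (z : ℕ → Bool) (n₀ : ℕ) :
    ∃ (y : ℕ → Bool) (F : Set ℕ), F.Infinite ∧ (∀ i < n₀, i ∉ F ∧ y i = z i) ∧
      ∀ x : ℕ → Bool, (∀ i ∉ F, x i = y i) → x ∈ ⋂ k, U k := by
  choose w N hN hw using fun k => (hUo k).exists_forcing_block (hUd k)
  obtain ⟨n, hn0, hn_succ⟩ : ∃ n : ℕ → ℕ, n 0 = n₀ ∧ ∀ k, n (k + 1) = N k (n k) + 1 :=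
    ⟨fun k => Nat.rec n₀ (fun k m => N k m + 1) k, rfl, fun _ => rfl⟩
  obtain ⟨zs, hzs0, hzs_succ⟩ : ∃ zs : ℕ → ℕ → Bool, zs 0 = z ∧
      ∀ k i, zs (k + 1) i = if i < n k then zs k i else w k (n k) i :=
    ⟨fun k => Nat.rec z (fun k zk i => if i < n k then zk i else w k (n k) i) k, rfl,
      fun _ _ => rfl⟩
  let p : ℕ → ℕ := fun k => N k (n k)
  -- Stage `k` forces `U k` on `[n k, p k)`, leaves `p k` free, and `zs k` is the branch so far.
  have hnp : ∀ k, n k ≤ p k := fun k => hN k (n k)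
  have hpn : ∀ k, n (k + 1) = p k + 1 := hn_succ
  have hn : StrictMono n := strictMono_nat_of_lt_succ fun k => by grind
  have hp : StrictMono p := strictMono_nat_of_lt_succ fun k => by grind
  obtain ⟨y, hy⟩ := exists_forall_eq_of_eq_below (z := zs) hn fun k i hi => by
    rw [hzs_succ, if_pos hi]
  have hp_notMem : ∀ k j, p j ∉ Ico (n k) (p k) := by
    rintro k j ⟨hkj, hjk⟩
    rcases lt_or_ge j k with hjk' | hkj'
    · have := hn.monotone hjk'
      grind
    · exact (hp.monotone hkj').not_gt hjk
  refine ⟨y, range p, infinite_range_of_injective hp.injective, fun i hi => ⟨?_, ?_⟩,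
    fun x hx => mem_iInter.2 fun k => hw k (n k) x fun i hik => ?_⟩
  · rintro ⟨j, rfl⟩
    have := hn.monotone (Nat.zero_le j)
    grind
  · rw [hy 0 i (hn0 ▸ hi), hzs0]
  · have hi_lt : i < n (k + 1) := by grind
    rw [hx i fun ⟨j, hj⟩ => hp_notMem k j (hj ▸ hik), hy (k + 1) i hi_lt, hzs_succ,
      if_neg hik.1.not_gt]

lemma IsMeagre.exists_isOpen_dense_iInter_subset_compl {X : Type*} [TopologicalSpace X]
    [BaireSpace X] {A : Set X} (hA : IsMeagre A) :
    ∃ U : ℕ → Set X, (∀ k, IsOpen (U k)) ∧ (∀ k, Dense (U k)) ∧ ⋂ k, U k ⊆ Aᶜ := by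
  obtain ⟨G, hGA, hGδ, hGd⟩ := mem_residual.1 hA
  obtain ⟨U, hUo, rfl⟩ := hGδ.eq_iInter_nat
  exact ⟨U, hUo, fun k => hGd.mono (iInter_subset U k), hGA⟩

/-- If `X` is comeager in the basic open set `[s]`, then some Silver tree has its
body contained in `X ∩ [s]`. -/
theorem comeager_in_cyl_contains_silver_body (s : List Bool) (X : Set (ℕ → Bool))
    (h : IsMeagre (cyl s \ X)) :
    ∃ T : Set (List Bool), IsSilver T ∧ body T ⊆ X ∩ cyl s := by
  obtain ⟨U, hUo, hUd, hU⟩ := h.exists_isOpen_dense_iInter_subset_compl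
  obtain ⟨y, F, hF, hys, hyU⟩ :=
    exists_infinite_free_subset_iInter hUo hUd (fun i => s.getD i false) s.length
  refine ⟨silverTree y F, isSilver_silverTree hF, fun x hx => ?_⟩
  rw [mem_body_silverTree] at hx
  have hxs : x ∈ cyl s := fun i => by simpa [(hys i i.2).2] using hx i (hys i i.2).1
  refine ⟨?_, hxs⟩
  by_contra hxX
  exact hU (hyU x hx) ⟨hxs, hxX⟩
end

section
/- Let Θ be a topologically reasonable family of subsets of 2^ω. If every set in Θ has the Baire property, then every set in Θ is Silver measurable. -/
/-- `X` has the Baire property: it differs from an open set by a meager set. -/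
def HasBaireProp (X : Set (ℕ → Bool)) : Prop :=
  ∃ U : Set (ℕ → Bool), IsOpen U ∧ IsMeagre (symmDiff X U)

/-- `X ⊆ 2^ω` is Silver measurable: inside every Silver tree there is a Silver
subtree whose body is contained in `X` or disjoint from `X`. -/
def SilverMeasurable (X : Set (ℕ → Bool)) : Prop :=
  ∀ T : Set (List Bool), IsSilver T →
    ∃ T' : Set (List Bool), IsSilver T' ∧ T' ⊆ T ∧ (body T' ⊆ X ∨ body T' ∩ X = ∅)

/-- A family of subsets of Cantor space is topologically reasonable if it is closed
under continuous preimages and under intersections with closed sets. -/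
def TopReasonable (Θ : Set (Set (ℕ → Bool))) : Prop :=
  (∀ X ∈ Θ, ∀ f : (ℕ → Bool) → (ℕ → Bool), Continuous f → f ⁻¹' X ∈ Θ) ∧
  (∀ X ∈ Θ, ∀ C : Set (ℕ → Bool), IsClosed C → X ∩ C ∈ Θ)

/-!
A Silver tree is the tree of a partial function `p : ℕ → Option Bool` with infinitely many free
levels (`none`), and writing the bits of `x ∈ 2^ω` into the free levels of `p`, in order, is a
continuous map `fill p` of `2^ω` onto its body. So for `X ∈ Θ` it suffices to find a Silver
condition `q` whose branches lie inside or outside `Y = (fill p)⁻¹ X ∈ Θ`: the branches of the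
composite condition `fillCond p q` are `fill p`-images of branches of `q`.

By the Baire property, `Y` or its complement is meagre inside a nonempty open set `U`, and a fusion
argument gives a Silver condition with branches in `U` and in a prescribed sequence of dense open
sets `Dₙ`: after the `n`-th free level we fix a block of bits that forces every branch into `Dₙ`,
whatever the earlier free bits are, which is possible because there are only finitely many
choices for those.
-/

open Set
open PiNat (cylinder isOpen_cylinder self_mem_cylinder)

theorem List.forall_getElem_append_singleton {α : Type*} {P : ℕ → α → Prop} {t : List α}
    {a : α} :
    (∀ k (hk : k < (t ++ [a]).length), P k (t ++ [a])[k]) ↔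
      (∀ k (hk : k < t.length), P k t[k]) ∧ P t.length a := by
  constructor
  · intro h
    refine ⟨fun k hk => ?_, by simpa using h t.length (by simp)⟩
    have := h k (by simp; omega)
    rwa [List.getElem_append_left hk] at this
  · rintro ⟨h, ha⟩ k hk
    rw [List.getElem_append]
    split_ifs with hk'
    · exact h k hk'
    · obtain rfl : k = t.length := by simp at hk; omega
      simpa using ha

theorem Bool.exists_option_of_nonempty {S : Set Bool} (hS : S.Nonempty) :
    ∃ o : Option Bool, ∀ i, i ∈ S ↔ ∀ b ∈ o, i = b := by
  by_cases ht : true ∈ S <;> by_cases hf : false ∈ S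
  · exact ⟨none, fun i => by cases i <;> simp [*]⟩
  · exact ⟨some true, fun i => by cases i <;> simp [*]⟩
  · exact ⟨some false, fun i => by cases i <;> simp [*]⟩
  · obtain ⟨i, hi⟩ := hS
    cases i <;> contradiction

theorem IsMeagre.exists_iInter_subset_compl {X : Type*} [TopologicalSpace X] {Z : Set X}
    (hZ : IsMeagre Z) :
    ∃ D : ℕ → Set X, (∀ n, IsOpen (D n)) ∧ (∀ n, Dense (D n)) ∧ ⋂ n, D n ⊆ Zᶜ := by
  obtain ⟨S, hSo, hSd, hSc, hSZ⟩ := mem_residual_iff.1 hZ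
  obtain ⟨D, hD⟩ := (hSc.insert univ).exists_eq_range (insert_nonempty _ _)
  have hDS : ∀ n, D n = univ ∨ D n ∈ S := fun n => by
    simpa only [← hD, mem_insert_iff] using mem_range_self (f := D) n
  refine ⟨D, fun n => (hDS n).elim (· ▸ isOpen_univ) (hSo _),
    fun n => (hDS n).elim (· ▸ dense_univ) (hSd _), fun x hx => hSZ fun s hs => ?_⟩
  obtain ⟨n, rfl⟩ : s ∈ range D := hD ▸ mem_insert_of_mem univ hs
  exact mem_iInter.1 hx n

theorem PiNat.exists_cylinder_subset {E : ℕ → Type*} [∀ n, TopologicalSpace (E n)]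
    [∀ n, DiscreteTopology (E n)] {U : Set (∀ n, E n)} (hU : IsOpen U) {x : ∀ n, E n}
    (hx : x ∈ U) : ∃ n, cylinder x n ⊆ U := by
  obtain ⟨_, ⟨y, n, rfl⟩, hxy, hyU⟩ :=
    (PiNat.isTopologicalBasis_cylinders E).exists_subset_of_mem_open hx hU
  exact ⟨n, PiNat.mem_cylinder_iff_eq.1 hxy ▸ hyU⟩

theorem Dense.exists_eqOn_Ico_imp_mem {D : Set (ℕ → Bool)} (hDd : Dense D) (hDo : IsOpen D)
    (m : ℕ) : ∃ l, ∃ z : ℕ → Bool, ∀ x, EqOn x z (Ico m (m + l)) → x ∈ D := by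
  classical
  suffices h : ∀ P : Finset (Fin m → Bool), ∃ l, ∃ z : ℕ → Bool, ∀ t ∈ P, ∀ x : ℕ → Bool,
      (∀ i : Fin m, x i = t i) → EqOn x z (Ico m (m + l)) → x ∈ D by
    obtain ⟨l, z, hz⟩ := h Finset.univ
    exact ⟨l, z, fun x => hz (fun i => x i) (Finset.mem_univ _) x fun _ => rfl⟩
  intro P
  induction P using Finset.induction_on with
  | empty => exact ⟨0, fun _ => false, by simp⟩
  | insert t₀ P _ ih =>
    obtain ⟨l, z, hz⟩ := ih
    set w : ℕ → Bool := fun k => if h : k < m then t₀ ⟨k, h⟩ else z k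
    obtain ⟨d, hdw, hdD⟩ := dense_iff_inter_open.1 hDd _ (isOpen_cylinder _ w (m + l))
      ⟨w, self_mem_cylinder w _⟩
    obtain ⟨n, hn⟩ := PiNat.exists_cylinder_subset hDo hdD
    refine ⟨l + n, d, fun t ht x hxt hxd => ?_⟩
    rcases Finset.mem_insert.1 ht with rfl | ht
    · refine hn fun k hk => ?_
      by_cases hkm : k < m
      · simp [hdw k (by omega), w, hkm, hxt ⟨k, hkm⟩]
      · exact hxd ⟨by omega, by omega⟩
    · refine hz t ht x hxt fun k hk => ?_
      simp [hxd ⟨hk.1, by have := hk.2; omega⟩, hdw k hk.2, w, not_lt.2 hk.1]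

namespace Silver

/-- The uniform tree of a partial function `p : ℕ → Option Bool`: level `k` is free when
`p k = none` and fixed to `b` when `p k = some b`. -/
def tree (p : ℕ → Option Bool) : Set (List Bool) :=
  {t | ∀ k (hk : k < t.length), ∀ b ∈ p k, t[k] = b}

def branches (p : ℕ → Option Bool) : Set (ℕ → Bool) :=
  {x | ∀ k, ∀ b ∈ p k, x k = b}

theorem append_singleton_mem_tree {p : ℕ → Option Bool} {t : List Bool} {i : Bool} :
    t ++ [i] ∈ tree p ↔ t ∈ tree p ∧ ∀ b ∈ p t.length, i = b :=
  List.forall_getElem_append_singleton (P := fun k c => ∀ b ∈ p k, c = b)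

theorem isTree_tree (p : ℕ → Option Bool) : IsTree (tree p) := by
  intro t ht k j hj
  simpa only [List.getElem_take] using ht j (by simp at hj; omega)

theorem exists_extension_mem_tree {p : ℕ → Option Bool} {t : List Bool} (ht : t ∈ tree p)
    (n : ℕ) : ∃ u ∈ tree p, t <+: u ∧ u.length = t.length + n := by
  induction n with
  | zero => exact ⟨t, ht, List.prefix_refl t, rfl⟩
  | succ n ih =>
    obtain ⟨u, hu, htu, hlen⟩ := ih
    refine ⟨u ++ [(p u.length).getD false], append_singleton_mem_tree.2 ⟨hu, ?_⟩,
      htu.trans (List.prefix_append _ _), by rw [List.length_append, hlen]; rfl⟩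
    intro b hb
    simp [Option.mem_def.1 hb]

theorem isSilver_tree {p : ℕ → Option Bool} (hp : {k | p k = none}.Infinite) :
    IsSilver (tree p) := by
  refine ⟨⟨isTree_tree p, ⟨[], by simp [tree]⟩, fun t ht => ?_⟩, fun s hs t ht hst i => ?_⟩
  · obtain ⟨k, hk, hkt⟩ := hp.exists_gt t.length
    obtain ⟨u, hu, htu, hlen⟩ := exists_extension_mem_tree ht (k - t.length)
    have hfree : p u.length = none := by rw [hlen, Nat.add_sub_cancel' hkt.le]; exact hk
    exact ⟨u, htu, hu, append_singleton_mem_tree.2 ⟨hu, by simp [hfree]⟩,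
      append_singleton_mem_tree.2 ⟨hu, by simp [hfree]⟩⟩
  · simp only [append_singleton_mem_tree, hst, hs, ht, true_and]

theorem body_tree (p : ℕ → Option Bool) : body (tree p) = branches p := by
  ext x
  simp only [body, tree, branches, mem_ofPred_eq, List.length_ofFn, List.getElem_ofFn]
  exact ⟨fun h k => h (k + 1) k (by omega), fun h n k _ => h k⟩

variable (p q : ℕ → Option Bool)

/-- The bits of `x` written into the free levels of `p`: a free level `k` is the
`Nat.count (p · = none) k`-th one. -/
def fill (x : ℕ → Bool) : ℕ → Bool :=
  fun k => (p k).getD (x (Nat.count (p · = none) k))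

def fillCond : ℕ → Option Bool :=
  fun k => (p k).or (q (Nat.count (p · = none) k))

theorem continuous_fill : Continuous (fill p) :=
  continuous_pi fun k => by
    cases h : p k
    · simpa only [fill, h, Option.getD_none] using continuous_apply _
    · simpa only [fill, h, Option.getD_some] using continuous_const

theorem tree_fillCond_subset : tree (fillCond p q) ⊆ tree p :=
  fun _ ht k hk b hb => ht k hk b (by simp [fillCond, Option.mem_def.1 hb])

variable {p q}

theorem fillCond_nth (hp : {k | p k = none}.Infinite) (j : ℕ) :
    fillCond p q (Nat.nth (p · = none) j) = q j := by
  simp [fillCond, Nat.nth_mem_of_infinite hp j, Nat.count_nth_of_infinite hp]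

theorem infinite_fillCond (hp : {k | p k = none}.Infinite) (hq : {k | q k = none}.Infinite) :
    {k | fillCond p q k = none}.Infinite := by
  refine (hq.image (Nat.nth_injective hp).injOn).mono ?_
  rintro _ ⟨j, hj, rfl⟩
  exact (fillCond_nth hp j).trans hj

theorem branches_fillCond_subset (hp : {k | p k = none}.Infinite) :
    branches (fillCond p q) ⊆ fill p '' branches q := by
  intro x hx
  refine ⟨fun j => x (Nat.nth (p · = none) j), fun j b hb => hx _ b ?_, funext fun k => ?_⟩
  · rwa [fillCond_nth hp]
  · cases h : p k with
    | none => simp [fill, h, Nat.nth_count (p := (p · = none)) h]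
    | some b => simpa [fill, h] using (hx k b (by simp [fillCond, h])).symm

theorem exists_cond_of_blocks {a : ℕ → ℕ} (ha : StrictMono a) (σ : ℕ → Bool)
    (w : ℕ → ℕ → Bool) :
    ∃ q : ℕ → Option Bool, {k | q k = none}.Infinite ∧ (∀ k < a 0, q k = some (σ k)) ∧
      ∀ j k, a j < k → k < a (j + 1) → q k = some (w j k) := by
  classical
  have hblock : ∀ k, ∃ j, k < a (j + 1) :=
    fun k => ⟨k, (ha.id_le k).trans_lt (ha k.lt_succ_self)⟩
  refine ⟨fun k => if k < a 0 then some (σ k) else if k ∈ range a then none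
    else some (w (Nat.find (hblock k)) k), ?_, fun k hk => if_pos hk, fun j k hjk hkj => ?_⟩
  · refine (infinite_range_of_injective ha.injective).mono ?_
    rintro _ ⟨j, rfl⟩
    simp [ha.monotone (Nat.zero_le j)]
  · have hk0 : ¬ k < a 0 := not_lt.2 ((ha.monotone (Nat.zero_le j)).trans hjk.le)
    have hkr : k ∉ range a := by
      rintro ⟨i, rfl⟩
      have := ha.lt_iff_lt.1 hjk
      have := ha.lt_iff_lt.1 hkj
      omega
    have hfind : Nat.find (hblock k) = j := (Nat.find_eq_iff _).2
      ⟨hkj, fun i hij => not_lt.2 ((ha.monotone (by omega : i + 1 ≤ j)).trans hjk.le)⟩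
    simp only [hk0, hkr, hfind, if_false]

theorem exists_branches_subset_disjoint {Z U : Set (ℕ → Bool)} (hZ : IsMeagre Z) (hU : IsOpen U)
    (hne : U.Nonempty) :
    ∃ q : ℕ → Option Bool, {k | q k = none}.Infinite ∧ branches q ⊆ U ∧
      Disjoint (branches q) Z := by
  obtain ⟨σ, hσ⟩ := hne
  obtain ⟨N, hN⟩ := PiNat.exists_cylinder_subset hU hσ
  obtain ⟨D, hDo, hDd, hDZ⟩ := hZ.exists_iInter_subset_compl
  choose l z hz using fun j => (hDd j).exists_eqOn_Ico_imp_mem (hDo j)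
  -- free positions `a j`; the block after `a j` forces every branch into `D j`
  let a : ℕ → ℕ := fun j => Nat.rec N (fun j aj => aj + 1 + l j (aj + 1)) j
  have ha : StrictMono a := strictMono_nat_of_lt_succ fun j => by
    change a j < a j + 1 + l j (a j + 1)
    omega
  obtain ⟨q, hq, hqσ, hqz⟩ := exists_cond_of_blocks ha σ fun j => z j (a j + 1)
  refine ⟨q, hq, fun x hx => hN fun k hk => hx k _ (hqσ k hk), disjoint_left.2 fun x hx => ?_⟩
  exact hDZ (mem_iInter.2 fun j => hz j (a j + 1) x fun k hk => hx k _ (hqz j k hk.1 hk.2))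

def levels (T : Set (List Bool)) (k : ℕ) : Set Bool :=
  {i | ∃ t ∈ T, t.length = k ∧ t ++ [i] ∈ T}

end Silver

namespace IsSilver

open Silver

variable {T : Set (List Bool)}

theorem nil_mem (hT : IsSilver T) : [] ∈ T := by
  obtain ⟨t, ht⟩ := hT.1.2.1
  simpa using hT.1.1 t ht 0

theorem exists_length_eq (hT : IsSilver T) (n : ℕ) : ∃ t ∈ T, t.length = n := by
  induction n with
  | zero => exact ⟨[], hT.nil_mem, rfl⟩
  | succ n ih =>
    obtain ⟨t, ht, rfl⟩ := ih
    obtain ⟨s, hts, -, -, hs⟩ := hT.1.2.2 t ht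
    refine ⟨(s ++ [true]).take (t.length + 1), hT.1.1 _ hs _, ?_⟩
    simp only [List.length_take, List.length_append, List.length_singleton]
    have := hts.length_le
    omega

theorem getElem_mem_levels (hT : IsSilver T) {t : List Bool} (ht : t ∈ T) {k : ℕ}
    (hk : k < t.length) : t[k] ∈ levels T k :=
  ⟨t.take k, hT.1.1 t ht k, by simp [hk.le], by
    rw [← List.take_succ_eq_append_getElem hk]; exact hT.1.1 t ht (k + 1)⟩

theorem mem_iff_forall_getElem_mem_levels (hT : IsSilver T) {t : List Bool} :
    t ∈ T ↔ ∀ k (hk : k < t.length), t[k] ∈ levels T k := by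
  refine ⟨fun ht k hk => hT.getElem_mem_levels ht hk, fun h => ?_⟩
  induction t using List.reverseRecOn with
  | nil => exact hT.nil_mem
  | append_singleton u i ih =>
    obtain ⟨hu, w, hw, hwu, hwi⟩ :=
      List.forall_getElem_append_singleton (P := fun k c => c ∈ levels T k) |>.1 h
    exact (hT.2 w hw u (ih hu) hwu i).1 hwi

theorem levels_nonempty (hT : IsSilver T) (k : ℕ) : (levels T k).Nonempty := by
  obtain ⟨t, ht, hlen⟩ := hT.exists_length_eq (k + 1)
  exact ⟨t[k]'(by omega), hT.getElem_mem_levels ht _⟩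

theorem exists_levels_eq_univ_gt (hT : IsSilver T) (n : ℕ) :
    ∃ k, n < k ∧ levels T k = univ := by
  obtain ⟨t, ht, hlen⟩ := hT.exists_length_eq (n + 1)
  obtain ⟨s, hts, hs, hs0, hs1⟩ := hT.1.2.2 t ht
  refine ⟨s.length, by have := hts.length_le; omega, eq_univ_of_forall fun i => ?_⟩
  cases i
  exacts [⟨s, hs, rfl, hs0⟩, ⟨s, hs, rfl, hs1⟩]

theorem exists_eq_tree (hT : IsSilver T) :
    ∃ p : ℕ → Option Bool, {k | p k = none}.Infinite ∧ T = tree p := by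
  choose p hp using fun k => Bool.exists_option_of_nonempty (hT.levels_nonempty k)
  refine ⟨p, Set.infinite_of_forall_exists_gt fun n => ?_, ?_⟩
  · obtain ⟨k, hnk, hk⟩ := hT.exists_levels_eq_univ_gt n
    refine ⟨k, ?_, hnk⟩
    cases h : p k with
    | none => exact h
    | some b => simpa using (hp k !b).1 (hk ▸ mem_univ _) b h
  · ext t
    simp only [hT.mem_iff_forall_getElem_mem_levels, hp, tree, mem_ofPred_eq]

end IsSilver

theorem HasBaireProp.exists_branches_subset_or_disjoint {Y : Set (ℕ → Bool)}
    (h : HasBaireProp Y) : ∃ q : ℕ → Option Bool, {k | q k = none}.Infinite ∧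
      (Silver.branches q ⊆ Y ∨ Disjoint (Silver.branches q) Y) := by
  obtain ⟨U, hU, hm⟩ := h
  rcases U.eq_empty_or_nonempty with rfl | hne
  · obtain ⟨q, hq, -, hdisj⟩ :=
      Silver.exists_branches_subset_disjoint hm isOpen_univ univ_nonempty
    exact ⟨q, hq, Or.inr (by rwa [← bot_eq_empty, symmDiff_bot] at hdisj)⟩
  · obtain ⟨q, hq, hqU, hdisj⟩ := Silver.exists_branches_subset_disjoint hm hU hne
    exact ⟨q, hq, Or.inl fun x hx => by_contra fun hxY =>
      disjoint_left.1 hdisj hx (mem_symmDiff.2 (Or.inr ⟨hqU hx, hxY⟩))⟩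

/-- If every set in a topologically reasonable family `Θ` has the Baire property,
then every set in `Θ` is Silver measurable. -/
theorem baireProp_implies_silverMeasurable (Θ : Set (Set (ℕ → Bool)))
    (hΘ : TopReasonable Θ) (hBP : ∀ X ∈ Θ, HasBaireProp X) :
    ∀ X ∈ Θ, SilverMeasurable X := by
  intro X hX T hT
  obtain ⟨p, hp, rfl⟩ := hT.exists_eq_tree
  obtain ⟨q, hq, hqX⟩ :=
    (hBP _ (hΘ.1 X hX _ (Silver.continuous_fill p))).exists_branches_subset_or_disjoint
  refine ⟨Silver.tree (Silver.fillCond p q), Silver.isSilver_tree (Silver.infinite_fillCond hp hq),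
    Silver.tree_fillCond_subset p q, ?_⟩
  have hbody := (Silver.body_tree _).trans_subset (Silver.branches_fillCond_subset (q := q) hp)
  rcases hqX with hqX | hqX
  · exact Or.inl (hbody.trans (image_subset_iff.2 hqX))
  · exact Or.inr (disjoint_iff_inter_eq_empty.1 ((disjoint_image_left.2 hqX).mono_left hbody))
end

section
/- Let T be a Silver tree, n ∈ ℕ, and let F be the set of all nodes of T of length n. Suppose t₀ ∈ F and S is a Silver tree with S ⊆ T_{t₀}. Then the union ⋃_{t ∈ F} (t ⊕ S) is a Silver tree contained in T, and its body equals ⋃_{t ∈ F} {t ⊕ x : x ∈ [S]}. -/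
/-- `T_t`: the set of nodes of `T` compatible with `t`. -/
def subtreeAt (T : Set (List Bool)) (t : List Bool) : Set (List Bool) :=
  { u ∈ T | u <+: t ∨ t <+: u }

/-- `t ⊕ u` for finite sequences: `(t ⊕ u)(m) = t(m)` for `m < |t|` and
`(t ⊕ u)(m) = u(m)` for `|t| ≤ m < |u|`; if `|u| < |t|` it is `t↾|u|`. -/
def oplusL (t u : List Bool) : List Bool :=
  t.take u.length ++ u.drop t.length

/-- `t ⊕ x` for `x ∈ 2^ω`: `(t ⊕ x)(m) = t(m)` for `m < |t|`, and `x(m)` otherwise. -/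
def oplusF (t : List Bool) (x : ℕ → Bool) : ℕ → Bool :=
  fun m => t.getD m (x m)

/-!
Write `n = |t₀|`. Since `S` is perfect and every node of `S` is compatible with `t₀`, `t₀ ∈ S`,
and the union is the graft of `S` onto level `n` of `T`: the sequences `v` with `v↾n ∈ T` and
`t₀ ⌢ (v beyond n) ∈ S`. Below level `n` the graft looks like `T`, above it like `S`, so it is
a Silver tree. Uniformity of `T` lets one swap the first `n` bits of `t₀ ⌢ w ∈ S ⊆ T` for any
other node of `T` of length `n`, so the graft lies in `T`. A branch `y` of the graft is `t ⊕ x`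
with `t = y↾n ∈ T` and `x = t₀ ⊕ y ∈ [S]`.
-/

theorem IsTree.nil_mem {T : Set (List Bool)} (hT : IsTree T) (hne : T.Nonempty) : [] ∈ T := by
  obtain ⟨t, ht⟩ := hne
  simpa using hT t ht 0

theorem IsTree.mem_of_prefix {T : Set (List Bool)} (hT : IsTree T) {s t : List Bool}
    (ht : t ∈ T) (hst : s <+: t) : s ∈ T := by
  rw [List.prefix_iff_eq_take.mp hst]
  exact hT t ht _

theorem IsPerfect.exists_prefix_le_length {T : Set (List Bool)} (hT : IsPerfect T)
    {v : List Bool} (hv : v ∈ T) (m : ℕ) : ∃ t ∈ T, v <+: t ∧ m ≤ t.length := by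
  induction m with
  | zero => exact ⟨v, hv, List.prefix_refl v, Nat.zero_le _⟩
  | succ m ih =>
    obtain ⟨t, htT, hvt, hmt⟩ := ih
    obtain ⟨s, hts, -, hs0, -⟩ := hT.2.2 t htT
    refine ⟨s ++ [false], hs0, hvt.trans (hts.trans (List.prefix_append _ _)), ?_⟩
    have := hts.length_le
    simp only [List.length_append, List.length_singleton]
    omega

theorem IsPerfect.exists_prefix_length_eq {T : Set (List Bool)} (hT : IsPerfect T)
    {v : List Bool} (hv : v ∈ T) {m : ℕ} (hm : v.length ≤ m) :
    ∃ t ∈ T, v <+: t ∧ t.length = m := by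
  obtain ⟨t, htT, hvt, hmt⟩ := hT.exists_prefix_le_length hv m
  exact ⟨t.take m, hT.1 t htT m, List.prefix_take_iff.mpr ⟨hvt, hm⟩, by simp [hmt]⟩

theorem IsSilver.append_mem_of_length_eq {T : Set (List Bool)} (hT : IsSilver T)
    (w : List Bool) {s t : List Bool} (hs : s ∈ T) (ht : t ∈ T)
    (hlen : s.length = t.length) (hsw : s ++ w ∈ T) : t ++ w ∈ T := by
  induction w generalizing s t with
  | nil => simpa using ht
  | cons i w ih =>
    rw [List.append_cons] at hsw ⊢
    have hsi : s ++ [i] ∈ T := hT.1.1.mem_of_prefix hsw (List.prefix_append _ _)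
    exact ih hsi ((hT.2 s hs t ht hlen i).mp hsi) (by simp [hlen]) hsw

theorem mem_of_subset_subtreeAt {T S : Set (List Bool)} {t₀ : List Bool} (hS : IsPerfect S)
    (hSsub : S ⊆ subtreeAt T t₀) : t₀ ∈ S := by
  obtain ⟨u, hu⟩ := hS.2.1
  obtain ⟨s, hs, -, hlen⟩ := hS.exists_prefix_le_length hu t₀.length
  refine hS.1.mem_of_prefix hs ?_
  rcases (hSsub hs).2 with h | h
  · rw [h.eq_of_length (le_antisymm h.length_le hlen)]
  · exact h

theorem oplusL_of_length_le {t u : List Bool} (h : u.length ≤ t.length) :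
    oplusL t u = t.take u.length := by
  simp [oplusL, List.drop_eq_nil_of_le h]

theorem oplusL_of_le_length {t u : List Bool} (h : t.length ≤ u.length) :
    oplusL t u = t ++ u.drop t.length := by
  simp [oplusL, List.take_of_length_le h]

theorem oplusL_eq_take (t v : List Bool) :
    oplusL t v = (t ++ v.drop t.length).take v.length := by
  rcases le_total v.length t.length with h | h
  · simp [oplusL_of_length_le h, List.drop_eq_nil_of_le h]
  · rw [oplusL_of_le_length h, List.take_of_length_le (by simp; omega)]

theorem ofFn_oplusF (t : List Bool) (x : ℕ → Bool) (m : ℕ) :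
    List.ofFn (fun i : Fin m => oplusF t x i) = oplusL t (List.ofFn fun i : Fin m => x i) := by
  apply List.ext_getElem
  · simp [oplusL]; omega
  · intro i h1 h2
    simp only [List.getElem_ofFn, oplusF, oplusL, List.getElem_append, List.getD_eq_getElem?_getD]
    simp only [List.length_ofFn, List.length_take, List.getElem_take, List.getElem_drop,
      List.getElem_ofFn] at h1 ⊢
    split_ifs with hi
    · simp [List.getElem?_eq_getElem (show i < t.length by omega)]
    · rw [List.getElem?_eq_none (by omega), Option.getD_none]
      congr 1
      omega

theorem oplusF_ofFn {x y : ℕ → Bool} {n : ℕ} (h : ∀ m, n ≤ m → x m = y m) :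
    oplusF (List.ofFn fun i : Fin n => y i) x = y := by
  funext m
  rcases lt_or_ge m n with hm | hm
  · simp [oplusF, hm]
  · simp [oplusF, Nat.not_lt.mpr hm, h m hm]

def graft (T : Set (List Bool)) (t₀ : List Bool) (S : Set (List Bool)) : Set (List Bool) :=
  { v | v.take t₀.length ∈ T ∧ t₀ ++ v.drop t₀.length ∈ S }

section Graft

variable {T S : Set (List Bool)} {t₀ : List Bool}

theorem mem_graft_iff_of_length_le (ht₀ : t₀ ∈ S) {v : List Bool}
    (hv : v.length ≤ t₀.length) : v ∈ graft T t₀ S ↔ v ∈ T := by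
  simp [graft, List.take_of_length_le hv, List.drop_eq_nil_of_le hv, ht₀]

theorem append_mem_graft_iff {t w : List Bool} (ht : t.length = t₀.length) :
    t ++ w ∈ graft T t₀ S ↔ t ∈ T ∧ t₀ ++ w ∈ S := by
  simp [graft, ← ht]

theorem exists_append_of_le_length {v : List Bool} {n : ℕ} (hv : n ≤ v.length) :
    ∃ t w, t.length = n ∧ v = t ++ w :=
  ⟨v.take n, v.drop n, by simp [hv], (List.take_append_drop n v).symm⟩

theorem isTree_graft (hT : IsTree T) (hS : IsTree S) : IsTree (graft T t₀ S) := by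
  rintro v ⟨hvT, hvS⟩ k
  refine ⟨?_, ?_⟩
  · rw [List.take_take, min_comm, ← List.take_take]
    exact hT _ hvT k
  · rw [List.drop_take, ← List.take_length_add_append]
    exact hS _ hvS _

theorem isPerfect_graft (hT : IsPerfect T) (hS : IsPerfect S) (ht₀ : t₀ ∈ S) :
    IsPerfect (graft T t₀ S) := by
  refine ⟨isTree_graft hT.1 hS.1, ⟨[], (mem_graft_iff_of_length_le ht₀ (Nat.zero_le _)).2
    (hT.1.nil_mem hT.2.1)⟩, ?_⟩
  intro v hv
  obtain ⟨t, w, ht, htw, hvtw⟩ : ∃ t w, t.length = t₀.length ∧ t ++ w ∈ graft T t₀ S ∧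
      v <+: t ++ w := by
    rcases le_total v.length t₀.length with hlen | hlen
    · obtain ⟨t, htT, hvt, ht⟩ :=
        hT.exists_prefix_length_eq ((mem_graft_iff_of_length_le ht₀ hlen).1 hv) hlen
      exact ⟨t, [], ht, (append_mem_graft_iff ht).2 ⟨htT, by simpa using ht₀⟩, by simpa using hvt⟩
    · obtain ⟨t, w, ht, rfl⟩ := exists_append_of_le_length hlen
      exact ⟨t, w, ht, hv, List.prefix_refl _⟩
  rw [append_mem_graft_iff ht] at htw
  obtain ⟨s, ⟨w', rfl⟩, hsplit⟩ := hS.2.2 _ htw.2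
  refine ⟨t ++ w ++ w', hvtw.trans (List.prefix_append _ _), ?_⟩
  simpa only [SplitNode, List.append_assoc, append_mem_graft_iff ht, htw.1, true_and]
    using hsplit

theorem isSilver_graft (hT : IsSilver T) (hS : IsSilver S) (ht₀ : t₀ ∈ S) :
    IsSilver (graft T t₀ S) := by
  refine ⟨isPerfect_graft hT.1 hS.1 ht₀, fun s hs t ht hlen i => ?_⟩
  rcases lt_or_ge s.length t₀.length with hshort | hlong
  · have hshort' : (s ++ [i]).length ≤ t₀.length := by simpa using hshort
    rw [mem_graft_iff_of_length_le ht₀ hshort.le] at hs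
    rw [mem_graft_iff_of_length_le ht₀ (hlen ▸ hshort.le)] at ht
    rw [mem_graft_iff_of_length_le ht₀ hshort',
      mem_graft_iff_of_length_le ht₀ (by simpa [hlen] using hshort')]
    exact hT.2 s hs t ht hlen i
  · obtain ⟨a, w, ha, rfl⟩ := exists_append_of_le_length hlong
    obtain ⟨b, w', hb, rfl⟩ := exists_append_of_le_length (hlen ▸ hlong)
    rw [append_mem_graft_iff ha] at hs
    rw [append_mem_graft_iff hb] at ht
    rw [List.append_assoc, List.append_assoc, append_mem_graft_iff ha, append_mem_graft_iff hb,
      ← List.append_assoc, ← List.append_assoc, and_iff_right hs.1, and_iff_right ht.1]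
    exact hS.2 _ hs.2 _ ht.2 (by simp_all) i

theorem graft_subset (hT : IsSilver T) (hST : S ⊆ T) : graft T t₀ S ⊆ T := by
  intro v hv
  rcases le_total v.length t₀.length with hlen | hlen
  · simpa [graft, List.take_of_length_le hlen] using hv.1
  · obtain ⟨t, w, ht, rfl⟩ := exists_append_of_le_length hlen
    rw [append_mem_graft_iff ht] at hv
    have ht₀T : t₀ ∈ T := hT.1.1.mem_of_prefix (hST hv.2) (List.prefix_append _ _)
    exact hT.append_mem_of_length_eq w ht₀T hv.1 ht.symm (hST hv.2)

end Graft

section Union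

variable {T S : Set (List Bool)} {t₀ : List Bool}

theorem oplusL_mem_graft (hT : IsTree T) (ht₀ : t₀ ∈ S) {t u : List Bool} (htT : t ∈ T)
    (ht : t.length = t₀.length) (hu : u ∈ S) (hcomp : u <+: t₀ ∨ t₀ <+: u) :
    oplusL t u ∈ graft T t₀ S := by
  rcases le_total u.length t₀.length with hlen | hlen
  · rw [oplusL_of_length_le (ht ▸ hlen), mem_graft_iff_of_length_le ht₀ (by simp [ht])]
    exact hT t htT _
  · obtain ⟨w, rfl⟩ : t₀ <+: u := hcomp.elim
      (fun h => (h.eq_of_length (le_antisymm h.length_le hlen)) ▸ List.prefix_refl _) id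
    rw [oplusL_of_le_length (by simp [ht]), ht, List.drop_left,
      append_mem_graft_iff ht]
    exact ⟨htT, hu⟩

theorem exists_oplusL_eq_of_mem_graft (hT : IsPerfect T) (hS : IsTree S) (ht₀ : t₀ ∈ S)
    {v : List Bool} (hv : v ∈ graft T t₀ S) :
    ∃ t ∈ T, t.length = t₀.length ∧ ∃ u ∈ S, oplusL t u = v := by
  rcases le_total v.length t₀.length with hlen | hlen
  · obtain ⟨t, htT, hvt, ht⟩ :=
      hT.exists_prefix_length_eq ((mem_graft_iff_of_length_le ht₀ hlen).1 hv) hlen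
    refine ⟨t, htT, ht, t₀.take v.length, hS _ ht₀ _, ?_⟩
    rw [oplusL_of_length_le (by simp [ht]), List.length_take_of_le hlen]
    exact (List.prefix_iff_eq_take.mp hvt).symm
  · obtain ⟨t, w, ht, rfl⟩ := exists_append_of_le_length hlen
    rw [append_mem_graft_iff ht] at hv
    refine ⟨t, hv.1, ht, t₀ ++ w, hv.2, ?_⟩
    rw [oplusL_of_le_length (by simp [ht]), ht, List.drop_left]

theorem biUnion_image_oplusL_eq_graft (hT : IsPerfect T) (hS : IsTree S)
    (hSsub : S ⊆ subtreeAt T t₀) (ht₀ : t₀ ∈ S) :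
    ⋃ t ∈ { t ∈ T | t.length = t₀.length }, oplusL t '' S = graft T t₀ S := by
  refine subset_antisymm ?_ fun v hv => ?_
  · refine Set.iUnion₂_subset fun t ⟨htT, ht⟩ => Set.image_subset_iff.2 fun u hu => ?_
    exact oplusL_mem_graft hT.1 ht₀ htT ht hu (hSsub hu).2
  · obtain ⟨t, htT, ht, u, hu, rfl⟩ := exists_oplusL_eq_of_mem_graft hT hS ht₀ hv
    exact Set.mem_biUnion ⟨htT, ht⟩ ⟨u, hu, rfl⟩

theorem body_graft_subset (hS : IsTree S) :
    body (graft T t₀ S) ⊆ ⋃ t ∈ { t ∈ T | t.length = t₀.length }, oplusF t '' body S := by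
  intro y hy
  have hyT : (List.ofFn fun i : Fin t₀.length => y i) ∈ T := by
    simpa [List.take_of_length_le] using (hy t₀.length).1
  refine Set.mem_biUnion ⟨hyT, by simp⟩ ⟨oplusF t₀ y, fun m => ?_, oplusF_ofFn fun m hm => ?_⟩
  · rw [ofFn_oplusF, oplusL_eq_take]
    exact hS _ (hy m).2 _
  · exact List.getD_eq_default _ _ hm

theorem biUnion_image_oplusF_body_subset (F S : Set (List Bool)) :
    ⋃ t ∈ F, oplusF t '' body S ⊆ body (⋃ t ∈ F, oplusL t '' S) :=
  Set.iUnion₂_subset fun t ht => Set.image_subset_iff.2 fun x hx m =>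
    Set.mem_biUnion ht ⟨_, hx m, (ofFn_oplusF t x m).symm⟩

end Union

theorem silver_uniform_union_general (T : Set (List Bool)) (hT : IsSilver T) (n : ℕ)
    (t₀ : List Bool) (ht₀len : t₀.length = n)
    (S : Set (List Bool)) (hS : IsSilver S) (hSsub : S ⊆ subtreeAt T t₀) :
    IsSilver (⋃ t ∈ { t ∈ T | t.length = n }, oplusL t '' S) ∧
    (⋃ t ∈ { t ∈ T | t.length = n }, oplusL t '' S) ⊆ T ∧
    body (⋃ t ∈ { t ∈ T | t.length = n }, oplusL t '' S) =
      ⋃ t ∈ { t ∈ T | t.length = n }, oplusF t '' body S := by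
  subst ht₀len
  have ht₀S : t₀ ∈ S := mem_of_subset_subtreeAt hS.1 hSsub
  have hU := biUnion_image_oplusL_eq_graft hT.1 hS.1.1 hSsub ht₀S
  refine ⟨hU ▸ isSilver_graft hT hS ht₀S, hU ▸ graft_subset hT fun u hu => (hSsub hu).1, ?_⟩
  refine subset_antisymm ?_ (biUnion_image_oplusF_body_subset _ _)
  exact hU ▸ body_graft_subset hS.1.1

/-- Let `T` be a Silver tree, `F` the set of nodes of `T` of length `n`, `t₀ ∈ F`,
and `S ⊆ T_{t₀}` a Silver tree. Then `⋃_{t ∈ F} (t ⊕ S)` is a Silver tree contained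
in `T`, and its body equals `⋃_{t ∈ F} {t ⊕ x : x ∈ [S]}`. -/
theorem silver_uniform_union (T : Set (List Bool)) (hT : IsSilver T) (n : ℕ)
    (t₀ : List Bool) (ht₀ : t₀ ∈ T) (ht₀len : t₀.length = n)
    (S : Set (List Bool)) (hS : IsSilver S) (hSsub : S ⊆ subtreeAt T t₀) :
    IsSilver (⋃ t ∈ { t ∈ T | t.length = n }, oplusL t '' S) ∧
    (⋃ t ∈ { t ∈ T | t.length = n }, oplusL t '' S) ⊆ T ∧
    body (⋃ t ∈ { t ∈ T | t.length = n }, oplusL t '' S) =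
      ⋃ t ∈ { t ∈ T | t.length = n }, oplusF t '' body S :=
  silver_uniform_union_general T hT n t₀ ht₀len S hS hSsub
end

section
/- Every comeager subset of Baire space contains the body of a Miller tree: if Y ⊆ ω^ω is comeager (its complement is meager), then there exists a Miller tree T with [T] ⊆ Y. -/
/-- `T` is a tree of finite sequences of natural numbers: closed under initial segments. -/
def IsTreeN (T : Set (List ℕ)) : Prop :=
  ∀ t ∈ T, ∀ k : ℕ, t.take k ∈ T

/-- The set of immediate successors of `t` in `T`. -/
def succs (T : Set (List ℕ)) (t : List ℕ) : Set ℕ :=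
  { k | t ++ [k] ∈ T }

/-- `t` is a splitting node of `T`: it lies in `T` and has at least two
immediate successors in `T`. -/
def SplitNodeN (T : Set (List ℕ)) (t : List ℕ) : Prop :=
  t ∈ T ∧ ∃ k l : ℕ, k ≠ l ∧ k ∈ succs T t ∧ l ∈ succs T t

/-- `T` is a Miller (superperfect) tree: a nonempty tree in which every node
extends to a splitting node, and every splitting node has infinitely many
immediate successors. -/
def IsMiller (T : Set (List ℕ)) : Prop :=
  IsTreeN T ∧ T.Nonempty ∧ (∀ t ∈ T, ∃ s, t <+: s ∧ SplitNodeN T s) ∧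
  (∀ t : List ℕ, SplitNodeN T t → (succs T t).Infinite)

/-- The body `[T]` of a tree: all infinite branches whose finite initial
segments all lie in `T`. -/
def bodyN (T : Set (List ℕ)) : Set (ℕ → ℕ) :=
  { x | ∀ n : ℕ, (List.ofFn fun i : Fin n => x i) ∈ T }

/-- `X ⊆ ω^ω` is Miller measurable: inside every Miller tree there is a Miller
subtree whose body is contained in `X` or disjoint from `X`. -/
def MillerMeasurable (X : Set (ℕ → ℕ)) : Prop :=
  ∀ T : Set (List ℕ), IsMiller T →
    ∃ T' : Set (List ℕ), IsMiller T' ∧ T' ⊆ T ∧ (bodyN T' ⊆ X ∨ bodyN T' ∩ X = ∅)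

/-- A family of subsets of Baire space is topologically reasonable if it is closed
under continuous preimages and under intersections with closed sets. -/
def TopReasonableN (Θ : Set (Set (ℕ → ℕ))) : Prop :=
  (∀ X ∈ Θ, ∀ f : (ℕ → ℕ) → (ℕ → ℕ), Continuous f → f ⁻¹' X ∈ Θ) ∧
  (∀ X ∈ Θ, ∀ C : Set (ℕ → ℕ), IsClosed C → X ∩ C ∈ Θ)


/-!
Write the comeager set as a superset of `⋂ n, U n` with every `U n` open and dense. Each finite
sequence `t` has an extension `F n t` whose basic neighbourhood lies in `U n`. Interleaving
arbitrary one-step extensions with these extensions embeds the full tree `ω^{<ω}` into itself;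
the downward closure of the image is a Miller tree whose splitting nodes are exactly the images,
so every branch passes, for each `n`, through a node of the form `F n t` and hence lies in
every `U n`.
-/

open Set

section Branching

variable {α : Type*} {t u x y : List α}

def BranchAt (t x y : List α) : Prop :=
  ∃ a b, a ≠ b ∧ t ++ [a] <+: x ∧ t ++ [b] <+: y

lemma eq_of_append_singleton_prefix {a b : α} (ha : t ++ [a] <+: x) (hb : t ++ [b] <+: x) :
    a = b := by
  have h := (List.prefix_of_prefix_length_le ha hb (by simp)).eq_of_length (by simp)
  simpa using h

lemma prefix_or_prefix_or_branchAt (x y : List α) : x <+: y ∨ y <+: x ∨ ∃ t, BranchAt t x y := by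
  induction x generalizing y with
  | nil => exact Or.inl List.nil_prefix
  | cons a x ih =>
    cases y with
    | nil => exact Or.inr (Or.inl List.nil_prefix)
    | cons b y =>
      by_cases hab : a = b
      · subst hab
        rcases ih y with h | h | ⟨t, c, d, hcd, hc, hd⟩
        · exact Or.inl (List.cons_prefix_cons.2 ⟨rfl, h⟩)
        · exact Or.inr (Or.inl (List.cons_prefix_cons.2 ⟨rfl, h⟩))
        · exact Or.inr (Or.inr ⟨a :: t, c, d, hcd, List.cons_prefix_cons.2 ⟨rfl, hc⟩,
            List.cons_prefix_cons.2 ⟨rfl, hd⟩⟩)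
      · exact Or.inr (Or.inr ⟨[], a, b, hab, by simp, by simp⟩)

lemma BranchAt.symm (h : BranchAt t x y) : BranchAt t y x :=
  let ⟨a, b, hab, ha, hb⟩ := h
  ⟨b, a, hab.symm, hb, ha⟩

lemma BranchAt.not_prefix (h : BranchAt t x y) : ¬ x <+: y := fun hxy =>
  let ⟨_, _, hab, ha, hb⟩ := h
  hab (eq_of_append_singleton_prefix (ha.trans hxy) hb)

lemma BranchAt.prefix_left (h : BranchAt t x y) : t <+: x :=
  let ⟨_, _, _, ha, _⟩ := h
  (List.prefix_append _ _).trans ha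

lemma BranchAt.length_le (h : BranchAt t x y) (hx : u <+: x) (hy : u <+: y) :
    u.length ≤ t.length := by
  obtain ⟨a, b, hab, ha, hb⟩ := h
  by_contra! hlt
  exact hab (eq_of_append_singleton_prefix (List.prefix_of_prefix_length_le ha hx (by simpa))
    (List.prefix_of_prefix_length_le hb hy (by simpa)))

lemma BranchAt.eq (h : BranchAt t x y) (h' : BranchAt u x y) : t = u := by
  have hlen : t.length = u.length := le_antisymm (h'.length_le h.prefix_left h.symm.prefix_left)
    (h.length_le h'.prefix_left h'.symm.prefix_left)
  exact (List.prefix_of_prefix_length_le h.prefix_left h'.prefix_left hlen.le).eq_of_length hlen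

end Branching

def initSeg (x : ℕ → ℕ) (n : ℕ) : List ℕ :=
  List.ofFn fun i : Fin n => x i

lemma mem_bodyN_iff {T : Set (List ℕ)} {x : ℕ → ℕ} : x ∈ bodyN T ↔ ∀ n, initSeg x n ∈ T :=
  Iff.rfl

@[simp]
lemma length_initSeg (x : ℕ → ℕ) (n : ℕ) : (initSeg x n).length = n := by
  simp [initSeg]

lemma initSeg_add_one (x : ℕ → ℕ) (n : ℕ) : initSeg x (n + 1) = initSeg x n ++ [x n] := by
  rw [initSeg, List.ofFn_succ']
  simp [initSeg, List.concat_eq_append]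

lemma initSeg_prefix_initSeg (x : ℕ → ℕ) {m n : ℕ} (h : m ≤ n) : initSeg x m <+: initSeg x n := by
  induction n, h using Nat.le_induction with
  | base => exact List.prefix_refl _
  | succ n _ ih => exact ih.trans (initSeg_add_one x n ▸ List.prefix_append _ _)

lemma initSeg_eq_initSeg_iff {x y : ℕ → ℕ} {n : ℕ} :
    initSeg x n = initSeg y n ↔ x ∈ PiNat.cylinder y n := by
  simp [initSeg, List.ofFn_inj, funext_iff, Fin.forall_iff, PiNat.mem_cylinder_iff]

lemma initSeg_getD (t : List ℕ) : initSeg (fun i => t.getD i 0) t.length = t := by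
  simp [initSeg]

lemma exists_prefix_forall_initSeg_eq_mem {U : Set (ℕ → ℕ)} (hU : IsOpen U) (hd : Dense U)
    (t : List ℕ) : ∃ t', t <+: t' ∧ ∀ x, initSeg x t'.length = t' → x ∈ U := by
  set y₀ : ℕ → ℕ := fun i => t.getD i 0
  obtain ⟨y, hy₀, hyU⟩ := hd.inter_open_nonempty _ (PiNat.isOpen_cylinder (E := fun _ => ℕ) y₀
    t.length) ⟨y₀, PiNat.self_mem_cylinder _ _⟩
  obtain ⟨_, ⟨z, n, rfl⟩, hyz, hzU⟩ :=
    (PiNat.isTopologicalBasis_cylinders fun _ => ℕ).exists_subset_of_mem_open hyU hU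
  have hyt : initSeg y t.length = t := by
    rw [initSeg_eq_initSeg_iff.2 hy₀, initSeg_getD]
  have hprefix := initSeg_prefix_initSeg y (le_max_right n t.length)
  rw [hyt] at hprefix
  refine ⟨initSeg y (max n t.length), hprefix, fun x hx => hzU ?_⟩
  rw [length_initSeg, initSeg_eq_initSeg_iff] at hx
  rw [← PiNat.mem_cylinder_iff_eq.1 hyz]
  exact PiNat.cylinder_anti y (le_max_left _ _) hx

lemma exists_isOpen_dense_iInter_subset_of_mem_residual {X : Type*} [TopologicalSpace X]
    [BaireSpace X] {s : Set X} (hs : s ∈ residual X) :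
    ∃ U : ℕ → Set X, (∀ n, IsOpen (U n)) ∧ (∀ n, Dense (U n)) ∧ ⋂ n, U n ⊆ s := by
  obtain ⟨t, hts, hGδ, hdense⟩ := mem_residual.1 hs
  obtain ⟨U, hUo, rfl⟩ := hGδ.eq_iInter_nat
  exact ⟨U, hUo, fun n => hdense.mono (iInter_subset U n), hts⟩

def PrefixEmbedding (e : List ℕ → List ℕ) : Prop :=
  ∀ s k, e s ++ [k] <+: e (s ++ [k])

def generatedTree (e : List ℕ → List ℕ) : Set (List ℕ) :=
  {t | ∃ s, t <+: e s}

namespace PrefixEmbedding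

variable {e : List ℕ → List ℕ} (he : PrefixEmbedding e)
include he

lemma prefix_of_prefix {s r : List ℕ} (h : s <+: r) : e s <+: e r := by
  obtain ⟨w, rfl⟩ := h
  induction w generalizing s with
  | nil => simp
  | cons k w ih =>
    rw [← List.singleton_append, ← List.append_assoc]
    exact (List.prefix_append _ _).trans ((he s k).trans (ih (s := s ++ [k])))

lemma append_singleton_prefix {s r : List ℕ} {k : ℕ} (h : s ++ [k] <+: r) :
    e s ++ [k] <+: e r :=
  (he s k).trans (he.prefix_of_prefix h)

lemma branchAt {u s r : List ℕ} (h : BranchAt u s r) : BranchAt (e u) (e s) (e r) :=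
  let ⟨a, b, hab, ha, hb⟩ := h
  ⟨a, b, hab, he.append_singleton_prefix ha, he.append_singleton_prefix hb⟩

lemma prefix_of_append_singleton_prefix {s r : List ℕ} {k : ℕ} (h : e s ++ [k] <+: e r) :
    s ++ [k] <+: r := by
  have hlt : (e s).length < (e r).length := by simpa using h.length_le
  rcases prefix_or_prefix_or_branchAt s r with ⟨_ | ⟨c, w⟩, rfl⟩ | hrs | ⟨u, hu⟩
  · simp at hlt
  · have hc := eq_of_append_singleton_prefix h (he.append_singleton_prefix (k := c) ⟨w, by simp⟩)
    exact ⟨w, by simp [hc]⟩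
  · exact absurd (he.prefix_of_prefix hrs).length_le (not_le.2 hlt)
  · exact absurd ((List.prefix_append _ _).trans h) (he.branchAt hu).not_prefix

lemma succs_generatedTree (s : List ℕ) : succs (generatedTree e) (e s) = univ :=
  eq_univ_of_forall fun k => ⟨s ++ [k], he s k⟩

lemma eq_of_splitNodeN {t : List ℕ} (ht : SplitNodeN (generatedTree e) t) : ∃ u, t = e u := by
  obtain ⟨-, k, l, hkl, ⟨s₁, hk⟩, ⟨s₂, hl⟩⟩ := ht
  have hbranch : BranchAt t (e s₁) (e s₂) := ⟨k, l, hkl, hk, hl⟩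
  rcases prefix_or_prefix_or_branchAt s₁ s₂ with h | h | ⟨u, hu⟩
  · exact absurd (he.prefix_of_prefix h) hbranch.not_prefix
  · exact absurd (he.prefix_of_prefix h) hbranch.symm.not_prefix
  · exact ⟨u, hbranch.eq (he.branchAt hu)⟩

lemma isMiller_generatedTree : IsMiller (generatedTree e) := by
  refine ⟨fun t ⟨s, hs⟩ k => ⟨s, (List.take_prefix k t).trans hs⟩, ⟨[], [], List.nil_prefix⟩,
    fun t ⟨s, hs⟩ => ⟨e s, hs, ⟨s, List.prefix_refl _⟩, 0, 1, zero_ne_one, ?_⟩, fun t ht => ?_⟩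
  · simp [he.succs_generatedTree s]
  · obtain ⟨u, rfl⟩ := he.eq_of_splitNodeN ht
    simpa [he.succs_generatedTree u] using infinite_univ

lemma exists_initSeg_eq_of_mem_bodyN {x : ℕ → ℕ} (hx : x ∈ bodyN (generatedTree e)) (m : ℕ) :
    ∃ s : List ℕ, s.length = m ∧ initSeg x (e s).length = e s := by
  rw [mem_bodyN_iff] at hx
  induction m with
  | zero =>
    obtain ⟨r, hr⟩ := hx (e []).length
    exact ⟨[], rfl, (List.prefix_of_prefix_length_le hr (he.prefix_of_prefix List.nil_prefix)
      (by simp)).eq_of_length (by simp)⟩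
  | succ m ih =>
    obtain ⟨s, rfl, hs⟩ := ih
    set k := x (e s).length
    have hnext : initSeg x ((e s).length + 1) = e s ++ [k] := by rw [initSeg_add_one, hs]
    have hlen : (e s).length + 1 ≤ (e (s ++ [k])).length := by simpa using (he s k).length_le
    obtain ⟨r, hr⟩ := hx (e (s ++ [k])).length
    -- a branch of the tree through `e s ++ [k]` must continue along `e (s ++ [k])`
    have hsr : e (s ++ [k]) <+: e r :=
      he.prefix_of_prefix <| he.prefix_of_append_singleton_prefix <|
        hnext ▸ (initSeg_prefix_initSeg x hlen).trans hr
    exact ⟨s ++ [k], by simp,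
      (List.prefix_of_prefix_length_le hr hsr (by simp)).eq_of_length (by simp)⟩

end PrefixEmbedding

def embed (F : ℕ → List ℕ → List ℕ) (s : List ℕ) : List ℕ :=
  s.zipIdx.foldl (fun t p => F (p.2 + 1) (t ++ [p.1])) (F 0 [])

lemma embed_append_singleton (F : ℕ → List ℕ → List ℕ) (s : List ℕ) (k : ℕ) :
    embed F (s ++ [k]) = F (s.length + 1) (embed F s ++ [k]) := by
  simp [embed, List.zipIdx_append, List.foldl_append]

lemma exists_embed_eq (F : ℕ → List ℕ → List ℕ) (s : List ℕ) :
    ∃ t, embed F s = F s.length t := by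
  rcases List.eq_nil_or_concat' s with rfl | ⟨r, k, rfl⟩
  · exact ⟨[], rfl⟩
  · exact ⟨embed F r ++ [k], by simp [embed_append_singleton]⟩

lemma prefixEmbedding_embed {F : ℕ → List ℕ → List ℕ} (hF : ∀ n t, t <+: F n t) :
    PrefixEmbedding (embed F) := fun s k => by
  rw [embed_append_singleton]
  exact hF _ _

/-- Every comeager subset of Baire space contains the body of a Miller tree. -/
theorem comeager_contains_miller_body (Y : Set (ℕ → ℕ)) (hY : IsMeagre Yᶜ) :
    ∃ T : Set (List ℕ), IsMiller T ∧ bodyN T ⊆ Y := by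
  rw [IsMeagre, compl_compl] at hY
  obtain ⟨U, hUo, hUd, hUY⟩ := exists_isOpen_dense_iInter_subset_of_mem_residual hY
  choose F hF hFU using fun n => exists_prefix_forall_initSeg_eq_mem (hUo n) (hUd n)
  have he := prefixEmbedding_embed hF
  refine ⟨generatedTree (embed F), he.isMiller_generatedTree, fun x hx => hUY ?_⟩
  refine mem_iInter.2 fun m => ?_
  obtain ⟨s, rfl, hxs⟩ := he.exists_initSeg_eq_of_mem_bodyN hx m
  obtain ⟨t, ht⟩ := exists_embed_eq F s
  exact hFU _ t x (ht ▸ hxs)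
end
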